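/- arXiv:2503.19896 — 3 statements merged into one kernel-verified Lean document; each statement's English description precedes it below -/
import Mathlib

section
/- Let Z and S be random variables on a common finite probability space, with S taking values in a finite set 𝓢, and let f : 𝓢 → 𝓜 be a function into a finite set 𝓜. Suppose that for every s ∈ 𝓢 for which there exists s' ≠ s with f(s') = f(s), one has P(S = s | Z = z) = P(S = s) for every z with P(Z = z) > 0. Then I(Z; f∘S) = I(Z; S). (This is the classical content of the reverse direction of Result 2: if every memory state that gets merged by the encoding carries no information about the record Z, then merging loses no mutual information and the compressed agent attains the same work cost.) -/
open Finset

/-- Probability that the random variable `A` (on the finite probability space with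
probability mass function `μ`) takes the value `a`. -/
noncomputable def prb {Ω : Type*} [Fintype Ω] (μ : Ω → ℝ) {α : Type*} [DecidableEq α]
    (A : Ω → α) (a : α) : ℝ :=
  ∑ ω, if A ω = a then μ ω else 0

/-- Shannon entropy (in bits) of the random variable `A`. -/
noncomputable def entH {Ω : Type*} [Fintype Ω] (μ : Ω → ℝ) {α : Type*} [Fintype α]
    [DecidableEq α] (A : Ω → α) : ℝ :=
  -∑ a, prb μ A a * Real.logb 2 (prb μ A a)

/-- Mutual information `I(A;B) = H(A) + H(B) - H(A,B)` (in bits). -/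
noncomputable def mutInf {Ω : Type*} [Fintype Ω] (μ : Ω → ℝ) {α β : Type*}
    [Fintype α] [DecidableEq α] [Fintype β] [DecidableEq β] (A : Ω → α) (B : Ω → β) : ℝ :=
  entH μ A + entH μ B - entH μ (fun ω => (A ω, B ω))

/-- Conditional probability `P(A = a | B = b)`. -/
noncomputable def condPrb {Ω : Type*} [Fintype Ω] (μ : Ω → ℝ) {α β : Type*}
    [DecidableEq α] [DecidableEq β] (A : Ω → α) (B : Ω → β) (a : α) (b : β) : ℝ :=
  prb μ (fun ω => (A ω, B ω)) (a, b) / prb μ B b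

/-!
Write `I(Z; B) = H(Z) - H(Z | B)` and split the conditional entropy over the values of `B`.
The summand of `H(Z | f∘S)` at `m` collects the fibre `f⁻¹(m)`: a fibre with at most one state
contributes the same summand as that state, and on a larger fibre every state is independent of
`Z`, so both the merged summand and each individual summand are `P(·) · H(Z)`, and these add up.
-/

open Real

section Prb

variable {Ω α β γ : Type*} [Fintype Ω] [DecidableEq α] [DecidableEq β] [DecidableEq γ]
  {μ : Ω → ℝ}

lemma prb_nonneg (hμ : ∀ ω, 0 ≤ μ ω) (A : Ω → α) (a : α) : 0 ≤ prb μ A a :=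
  sum_nonneg fun ω _ => ite_nonneg (hμ ω) le_rfl

lemma sum_prb [Fintype α] (A : Ω → α) : ∑ a, prb μ A a = ∑ ω, μ ω := by
  unfold prb
  rw [sum_comm]
  simp

lemma prb_pair_swap (A : Ω → α) (B : Ω → β) (a : α) (b : β) :
    prb μ (fun ω => (B ω, A ω)) (b, a) = prb μ (fun ω => (A ω, B ω)) (a, b) := by
  simp only [prb, Prod.mk.injEq, and_comm]

lemma prb_pair_le_prb_fst (hμ : ∀ ω, 0 ≤ μ ω) (A : Ω → α) (B : Ω → β) (a : α) (b : β) :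
    prb μ (fun ω => (A ω, B ω)) (a, b) ≤ prb μ A a :=
  sum_le_sum fun ω _ => by
    simp only [Prod.mk.injEq]
    split_ifs <;> simp_all

lemma prb_comp [Fintype α] (A : Ω → α) (g : α → β) (b : β) :
    prb μ (fun ω => g (A ω)) b = ∑ a with g a = b, prb μ A a := by
  unfold prb
  rw [sum_comm]
  refine sum_congr rfl fun ω _ => ?_
  simp [sum_ite_eq]

lemma prb_pair_comp_right [Fintype α] (Z : Ω → γ) (A : Ω → α) (g : α → β) (z : γ) (b : β) :
    prb μ (fun ω => (Z ω, g (A ω))) (z, b)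
      = ∑ a with g a = b, prb μ (fun ω => (Z ω, A ω)) (z, a) := by
  unfold prb
  rw [sum_comm]
  refine sum_congr rfl fun ω _ => ?_
  by_cases hz : Z ω = z <;> simp [hz, sum_ite_eq]

lemma prb_pair_eq_mul_of_condPrb_eq (hμ : ∀ ω, 0 ≤ μ ω) {Z : Ω → γ} {S : Ω → α} {z : γ} {s : α}
    (h : 0 < prb μ Z z → condPrb μ S Z s z = prb μ S s) :
    prb μ (fun ω => (Z ω, S ω)) (z, s) = prb μ Z z * prb μ S s := by
  rcases (prb_nonneg hμ Z z).eq_or_lt with hz | hz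
  · rw [← hz, zero_mul]
    exact le_antisymm (hz ▸ prb_pair_le_prb_fst hμ Z S z s) (prb_nonneg hμ _ _)
  · rw [← prb_pair_swap, mul_comm]
    exact (div_eq_iff hz.ne').1 (h hz)

end Prb

lemma sum_negMulLog_mul_sub {ι : Type*} [Fintype ι] {p : ι → ℝ} (hp : ∑ i, p i = 1) (c : ℝ) :
    ∑ i, negMulLog (p i * c) - negMulLog c = c * ∑ i, negMulLog (p i) := by
  simp only [negMulLog_mul, sum_add_distrib, ← mul_sum, ← sum_mul, hp]
  ring

lemma sum_negMulLog_sum_sub_of_eq_mul {ι κ : Type*} [Fintype ι] {p : ι → ℝ} (hp : ∑ i, p i = 1)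
    {q : κ → ℝ} {J : ι → κ → ℝ} {T : Finset κ} (hJ : ∀ k ∈ T, ∀ i, J i k = p i * q k) :
    ∑ i, negMulLog (∑ k ∈ T, J i k) - negMulLog (∑ k ∈ T, q k)
      = ∑ k ∈ T, (∑ i, negMulLog (J i k) - negMulLog (q k)) := by
  have hsum : ∀ i, ∑ k ∈ T, J i k = p i * ∑ k ∈ T, q k := fun i => by
    rw [mul_sum]
    exact sum_congr rfl fun k hk => hJ k hk i
  calc _ = (∑ k ∈ T, q k) * ∑ i, negMulLog (p i) := by
          simp only [hsum]
          exact sum_negMulLog_mul_sub hp _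
    _ = ∑ k ∈ T, q k * ∑ i, negMulLog (p i) := sum_mul ..
    _ = _ := sum_congr rfl fun k hk => by
          simp only [hJ k hk]
          exact (sum_negMulLog_mul_sub hp _).symm

section Entropy

variable {Ω α β γ : Type*} [Fintype Ω] [DecidableEq α] [DecidableEq β] [DecidableEq γ]
  {μ : Ω → ℝ}

lemma entH_eq_sum_negMulLog [Fintype α] (A : Ω → α) :
    entH μ A = (∑ a, negMulLog (prb μ A a)) / log 2 := by
  simp only [entH, negMulLog, logb, sum_div, ← sum_neg_distrib]
  exact sum_congr rfl fun a _ => by ring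

/-- `P(B = b) · H(Z | B = b)`, in nats. -/
noncomputable def condEntTerm [Fintype γ] (μ : Ω → ℝ) (Z : Ω → γ) (B : Ω → β) (b : β) : ℝ :=
  ∑ z, negMulLog (prb μ (fun ω => (Z ω, B ω)) (z, b)) - negMulLog (prb μ B b)

lemma entH_pair_sub_entH [Fintype β] [Fintype γ] (Z : Ω → γ) (B : Ω → β) :
    entH μ (fun ω => (Z ω, B ω)) - entH μ B = (∑ b, condEntTerm μ Z B b) / log 2 := by
  rw [entH_eq_sum_negMulLog, entH_eq_sum_negMulLog, ← sub_div, Fintype.sum_prod_type_right]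
  simp only [condEntTerm, sum_sub_distrib]

lemma condEntTerm_comp_eq_sum_fiber [Fintype α] [Fintype γ] (hμ : ∀ ω, 0 ≤ μ ω)
    (hμ1 : ∑ ω, μ ω = 1) (Z : Ω → γ) (S : Ω → α) (f : α → β)
    (hmerged : ∀ s : α, (∃ s' : α, s' ≠ s ∧ f s' = f s) →
      ∀ z : γ, 0 < prb μ Z z → condPrb μ S Z s z = prb μ S s) (m : β) :
    condEntTerm μ Z (fun ω => f (S ω)) m = ∑ s with f s = m, condEntTerm μ Z S s := by
  simp only [condEntTerm, prb_comp S f, prb_pair_comp_right Z S f]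
  by_cases hT : ({s | f s = m} : Finset α).Nontrivial
  · refine sum_negMulLog_sum_sub_of_eq_mul ((sum_prb Z).trans hμ1) fun s hs z => ?_
    obtain ⟨s', hs', hne⟩ := hT.exists_ne s
    exact prb_pair_eq_mul_of_condPrb_eq hμ (hmerged s ⟨s', hne, by simp_all⟩ z)
  · obtain h | ⟨s, h⟩ := (Set.not_nontrivial_iff.1 hT).eq_empty_or_singleton
    · simp [coe_eq_empty.1 h]
    · simp [coe_eq_singleton.1 h]

end Entropy

/-- If every state `s` that is merged by the encoding `f` (i.e. shares its `f`-value
with some other state) carries no information about the record `Z` — that is,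
`P(S=s|Z=z) = P(S=s)` for all `z` with `P(Z=z) > 0` — then merging loses no mutual
information: `I(Z; f∘S) = I(Z; S)`. -/
theorem mutInf_comp_eq_of_merged_states_uninformative
    {Ω 𝒵 𝓢 𝓜 : Type*} [Fintype Ω] [Fintype 𝒵] [DecidableEq 𝒵]
    [Fintype 𝓢] [DecidableEq 𝓢] [Fintype 𝓜] [DecidableEq 𝓜]
    (μ : Ω → ℝ) (hμ : ∀ ω, 0 ≤ μ ω) (hμ1 : ∑ ω, μ ω = 1)
    (Z : Ω → 𝒵) (S : Ω → 𝓢) (f : 𝓢 → 𝓜)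
    (hmerged : ∀ s : 𝓢, (∃ s' : 𝓢, s' ≠ s ∧ f s' = f s) →
      ∀ z : 𝒵, 0 < prb μ Z z → condPrb μ S Z s z = prb μ S s) :
    mutInf μ Z (fun ω => f (S ω)) = mutInf μ Z S := by
  have hfiber : ∑ m, condEntTerm μ Z (fun ω => f (S ω)) m = ∑ s, condEntTerm μ Z S s := by
    simp only [condEntTerm_comp_eq_sum_fiber hμ hμ1 Z S f hmerged]
    exact sum_fiberwise univ f _
  have hS := entH_pair_sub_entH (μ := μ) Z S
  have hfS := entH_pair_sub_entH (μ := μ) Z (fun ω => f (S ω))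
  rw [hfiber] at hfS
  unfold mutInf
  linarith
end

section
/- Let p ∈ [0,1] and Γ₀, Γ₁, Γ_X ∈ (0,1) be real numbers. Define Φ(n) = p·Γ₀ⁿ + (1−p)·Γ₁ⁿ for n ∈ ℕ, μ = (1 − Γ_X·Γ₀)(1 − Γ_X·Γ₁) / ( p·(1 − Γ_X·Γ₁) + (1−p)·(1 − Γ_X·Γ₀) ), and π_n = μ·Γ_Xⁿ·Φ(n). Then: (i) 0 < Γ_X·Φ(n+1)/Φ(n) < 1 for every n; (ii) Σ_{n=0}^{∞} π_n = 1; (iii) π_{n+1} = π_n · Γ_X·Φ(n+1)/Φ(n) for every n; and (iv) π_0 = Σ_{n=0}^{∞} π_n · ( 1 − Γ_X·Φ(n+1)/Φ(n) ). Hence π is the stationary distribution of the Markov chain on ℕ in which state n moves to n+1 with probability Γ_X·Φ(n+1)/Φ(n) and resets to 0 with the complementary probability. -/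
/-!
The transition probability `Γ_X Φ (n + 1) / Φ n` lies in `(0, 1)` because `Φ` is a positive,
antitone mixture of powers and `Γ_X < 1`.  The chain only moves up by one or resets, so the
balance at `n + 1` is the ratio identity (iii), and the balance at `0` telescopes:
`Σ (π n - π (n + 1)) = π 0`.  Normalisation holds because `π` is `μ` times a mixture of two
geometric sequences with ratios `Γ_X Γ₀` and `Γ_X Γ₁`, whose sum is exactly `μ⁻¹`.
-/

lemma mul_add_one_sub_mul_pos {p x y : ℝ} (hp0 : 0 ≤ p) (hp1 : p ≤ 1) (hx : 0 < x)
    (hy : 0 < y) : 0 < p * x + (1 - p) * y :=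
  convex_Ioi (0 : ℝ) hx hy hp0 (sub_nonneg.2 hp1) (add_sub_cancel p 1)

lemma antitone_mul_pow_add_mul_pow {p q a b : ℝ} (hp : 0 ≤ p) (hq : 0 ≤ q)
    (ha0 : 0 ≤ a) (ha1 : a ≤ 1) (hb0 : 0 ≤ b) (hb1 : b ≤ 1) :
    Antitone fun n : ℕ => p * a ^ n + q * b ^ n := fun _ _ hmn =>
  add_le_add (mul_le_mul_of_nonneg_left (pow_le_pow_of_le_one ha0 ha1 hmn) hp)
    (mul_le_mul_of_nonneg_left (pow_le_pow_of_le_one hb0 hb1 hmn) hq)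

lemma hasSum_geometric_mixture_normalized {p a b : ℝ} (hp0 : 0 ≤ p) (hp1 : p ≤ 1)
    (ha : |a| < 1) (hb : |b| < 1) :
    HasSum (fun n : ℕ => (1 - a) * (1 - b) / (p * (1 - b) + (1 - p) * (1 - a)) *
      (p * a ^ n + (1 - p) * b ^ n)) 1 := by
  have ha' : 0 < 1 - a := sub_pos.2 (abs_lt.1 ha).2
  have hb' : 0 < 1 - b := sub_pos.2 (abs_lt.1 hb).2
  have hmix : HasSum (fun n : ℕ => p * a ^ n + (1 - p) * b ^ n)
      (p * (1 - a)⁻¹ + (1 - p) * (1 - b)⁻¹) :=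
    ((hasSum_geometric_of_abs_lt_one ha).mul_left p).add
      ((hasSum_geometric_of_abs_lt_one hb).mul_left (1 - p))
  have hinv : (1 - a) * (1 - b) / (p * (1 - b) + (1 - p) * (1 - a)) *
      (p * (1 - a)⁻¹ + (1 - p) * (1 - b)⁻¹) = 1 := by
    rw [div_mul_eq_mul_div, div_eq_one_iff_eq (mul_add_one_sub_mul_pos hp0 hp1 hb' ha').ne']
    field_simp [ha'.ne', hb'.ne']
  simpa only [hinv] using hmix.mul_left ((1 - a) * (1 - b) / (p * (1 - b) + (1 - p) * (1 - a)))

lemma hasSum_sub_succ {G : Type*} [AddCommGroup G] [TopologicalSpace G]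
    [IsTopologicalAddGroup G] {f : ℕ → G} {g : G} (hf : HasSum f g) :
    HasSum (fun n => f n - f (n + 1)) (f 0) := by
  simpa using hf.sub ((hasSum_nat_add_iff' 1).2 hf)

/-- The stationary distribution of the temporally coarse-grained stochastic reset clock.
With `Φ(n) = p·Γ₀ⁿ + (1−p)·Γ₁ⁿ`,
`μ = (1 − Γ_X Γ₀)(1 − Γ_X Γ₁)/(p(1 − Γ_X Γ₁) + (1−p)(1 − Γ_X Γ₀))` and
`π_n = μ·Γ_Xⁿ·Φ(n)`: (i) the transition probability `Γ_X·Φ(n+1)/Φ(n)` lies in `(0,1)`;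
(ii) `π` sums to `1`; (iii) `π_{n+1} = π_n · Γ_X·Φ(n+1)/Φ(n)`; and
(iv) `π₀ = Σₙ π_n·(1 − Γ_X·Φ(n+1)/Φ(n))`.  Hence `π` is stationary for the Markov
chain where state `n` moves to `n+1` with probability `Γ_X·Φ(n+1)/Φ(n)` and resets
to `0` with the complementary probability. -/
theorem reset_clock_stationary_distribution
    (p Γ₀ Γ₁ ΓX : ℝ) (hp0 : 0 ≤ p) (hp1 : p ≤ 1)
    (hΓ₀ : Γ₀ ∈ Set.Ioo (0 : ℝ) 1) (hΓ₁ : Γ₁ ∈ Set.Ioo (0 : ℝ) 1)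
    (hΓX : ΓX ∈ Set.Ioo (0 : ℝ) 1)
    (Φ : ℕ → ℝ) (hΦ : ∀ n, Φ n = p * Γ₀ ^ n + (1 - p) * Γ₁ ^ n)
    (μ : ℝ) (hμ : μ = (1 - ΓX * Γ₀) * (1 - ΓX * Γ₁) /
      (p * (1 - ΓX * Γ₁) + (1 - p) * (1 - ΓX * Γ₀)))
    (π : ℕ → ℝ) (hπ : ∀ n, π n = μ * ΓX ^ n * Φ n) :
    (∀ n : ℕ, 0 < ΓX * Φ (n + 1) / Φ n ∧ ΓX * Φ (n + 1) / Φ n < 1) ∧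
    HasSum π 1 ∧
    (∀ n : ℕ, π (n + 1) = π n * (ΓX * Φ (n + 1) / Φ n)) ∧
    HasSum (fun n : ℕ => π n * (1 - ΓX * Φ (n + 1) / Φ n)) (π 0) := by
  obtain ⟨hX0, hX1⟩ := hΓX
  have hΦpos (n : ℕ) : 0 < Φ n :=
    hΦ n ▸ mul_add_one_sub_mul_pos hp0 hp1 (pow_pos hΓ₀.1 n) (pow_pos hΓ₁.1 n)
  have hΦanti : Antitone Φ := by
    rw [funext hΦ]
    exact antitone_mul_pow_add_mul_pow hp0 (sub_nonneg.2 hp1)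
      hΓ₀.1.le hΓ₀.2.le hΓ₁.1.le hΓ₁.2.le
  have hstep (n : ℕ) : π (n + 1) = π n * (ΓX * Φ (n + 1) / Φ n) := by
    rw [hπ, hπ, pow_succ]
    field_simp [(hΦpos n).ne']
  have hratio {γ : ℝ} (hγ : γ ∈ Set.Ioo (0 : ℝ) 1) : |ΓX * γ| < 1 := by
    rw [abs_of_pos (mul_pos hX0 hγ.1)]
    exact mul_lt_one_of_nonneg_of_lt_one_left hX0.le hX1 hγ.2.le
  have hsum : HasSum π 1 := by
    have hπmix : π = fun n => μ * (p * (ΓX * Γ₀) ^ n + (1 - p) * (ΓX * Γ₁) ^ n) := by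
      ext n
      rw [hπ, hΦ, mul_pow, mul_pow]
      ring
    rw [hπmix, hμ]
    exact hasSum_geometric_mixture_normalized hp0 hp1 (hratio hΓ₀) (hratio hΓ₁)
  refine ⟨fun n => ⟨div_pos (mul_pos hX0 (hΦpos _)) (hΦpos n), ?_⟩, hsum, hstep, ?_⟩
  · rw [div_lt_one (hΦpos n)]
    exact (mul_lt_of_lt_one_left (hΦpos _) hX1).trans_le (hΦanti n.le_succ)
  · simpa only [hstep, ← mul_one_sub] using hasSum_sub_succ hsum
end

section
/- Let Z and I be finite nonempty sets, let (P(z))_{z∈Z} be a probability vector with P(z) > 0 for all z, for each z let (Q(i|z))_{i∈I} be a probability vector with Q(i|z) > 0 for all i, and set Q(i) = Σ_{z∈Z} P(z)·Q(i|z). Let (σ_i)_{i∈I} be vectors in a complex inner product space. Suppose that for every m ∈ I and every z ∈ Z, Σ_{i≠m} ( log Q(i|z) − log Q(i) )·|⟨σ_i, σ_m⟩|² = 0. Then for every i ∈ I, either ⟨σ_i, σ_m⟩ = 0 for all m ≠ i, or Q(i|z) = Q(i) for all z ∈ Z. (This is the dichotomy concluding the forward direction of Result 2: every causal state's quantum encoding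 is either perfectly distinguishable from all others, or the record z carries no information about that causal state.) -/
/-!
Averaging the hypothesis over the records `z` with weights `P z` turns it into
`∑_{i ≠ m} gᵢ ‖⟪σᵢ, σₘ⟫‖² = 0`, where `gᵢ = ∑_z P z (log Q(i|z) - log Q(i))`.
By Jensen's inequality for the strictly concave logarithm every `gᵢ ≤ 0`, with equality exactly
when `Q(i|z) = Q(i)` for all `z`. A vanishing sum of nonpositive terms has vanishing terms, so
either `gᵢ = 0` or every overlap `⟪σᵢ, σₘ⟫` with `m ≠ i` vanishes.
-/

open Finset

namespace Real

variable {α : Type*} {s : Finset α} {w p : α → ℝ}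

lemma sum_mul_log_sub_log_sum_eq (hw1 : ∑ z ∈ s, w z = 1) :
    ∑ z ∈ s, w z * (log (p z) - log (∑ z' ∈ s, w z' * p z')) =
      ∑ z ∈ s, w z • log (p z) - log (∑ z ∈ s, w z • p z) := by
  simp only [mul_sub, sum_sub_distrib, ← sum_mul, hw1, one_mul, smul_eq_mul]

lemma sum_mul_log_sub_log_sum_nonpos (hw : ∀ z ∈ s, 0 ≤ w z) (hw1 : ∑ z ∈ s, w z = 1)
    (hp : ∀ z ∈ s, 0 < p z) :
    ∑ z ∈ s, w z * (log (p z) - log (∑ z' ∈ s, w z' * p z')) ≤ 0 := by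
  rw [sum_mul_log_sub_log_sum_eq hw1, sub_nonpos]
  exact strictConcaveOn_log_Ioi.concaveOn.le_map_sum hw hw1 hp

lemma sum_mul_log_sub_log_sum_eq_zero_iff (hw : ∀ z ∈ s, 0 < w z) (hw1 : ∑ z ∈ s, w z = 1)
    (hp : ∀ z ∈ s, 0 < p z) :
    ∑ z ∈ s, w z * (log (p z) - log (∑ z' ∈ s, w z' * p z')) = 0 ↔
      ∀ z ∈ s, p z = ∑ z' ∈ s, w z' * p z' := by
  rw [sum_mul_log_sub_log_sum_eq hw1, sub_eq_zero, eq_comm,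
    strictConcaveOn_log_Ioi.map_sum_eq_iff hw hw1 hp]
  simp only [smul_eq_mul]

end Real

theorem causal_state_dichotomy_general
    {E 𝒵 ι : Type*} [NormedAddCommGroup E] [InnerProductSpace ℂ E]
    [Fintype 𝒵] [Fintype ι] [DecidableEq ι]
    (P : 𝒵 → ℝ) (hP : ∀ z, 0 < P z) (hP1 : ∑ z, P z = 1)
    (Q : ι → 𝒵 → ℝ) (hQ : ∀ i z, 0 < Q i z)
    (σ : ι → E)
    (h : ∀ (m : ι) (z : 𝒵), ∑ i ∈ Finset.univ.erase m,
      (Real.log (Q i z) - Real.log (∑ z', P z' * Q i z')) *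
        ‖(inner ℂ (σ i) (σ m) : ℂ)‖ ^ 2 = 0) :
    ∀ i : ι, (∀ m : ι, m ≠ i → (inner ℂ (σ i) (σ m) : ℂ) = 0) ∨
      (∀ z : 𝒵, Q i z = ∑ z', P z' * Q i z') := by
  intro i
  set gap : ι → ℝ := fun j => ∑ z, P z * (Real.log (Q j z) - Real.log (∑ z', P z' * Q j z'))
  have gap_nonpos (j : ι) : gap j ≤ 0 :=
    Real.sum_mul_log_sub_log_sum_nonpos (fun z _ => (hP z).le) hP1 (fun z _ => hQ j z)
  have averaged (m : ι) :
      ∑ j ∈ univ.erase m, gap j * ‖(inner ℂ (σ j) (σ m) : ℂ)‖ ^ 2 = 0 := by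
    simp only [gap, sum_mul, mul_assoc]
    rw [sum_comm]
    simp only [← mul_sum, h m, mul_zero, sum_const_zero]
  rcases (gap_nonpos i).lt_or_eq with hlt | heq
  · refine Or.inl fun m hm => ?_
    have term_nonpos : ∀ j ∈ univ.erase m, gap j * ‖(inner ℂ (σ j) (σ m) : ℂ)‖ ^ 2 ≤ 0 :=
      fun j _ => mul_nonpos_of_nonpos_of_nonneg (gap_nonpos j) (sq_nonneg _)
    have term_zero := (sum_eq_zero_iff_of_nonpos term_nonpos).1 (averaged m) i
      (mem_erase.2 ⟨hm.symm, mem_univ i⟩)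
    simpa [hlt.ne] using term_zero
  · right
    simpa using (Real.sum_mul_log_sub_log_sum_eq_zero_iff (fun z _ => hP z) hP1
      (fun z _ => hQ i z)).1 heq

/-- Dichotomy concluding the forward direction of Result 2.  With `P` a positive
probability vector over records `z`, `Q(·|z)` positive conditional distributions over
causal-state indices `i`, and `Q(i) = Σ_z P(z)·Q(i|z)`: if for every `m` and every `z`
`Σ_{i≠m} (log Q(i|z) − log Q(i))·|⟨σ_i, σ_m⟩|² = 0`, then each index `i` satisfies
either `⟨σ_i, σ_m⟩ = 0` for all `m ≠ i` (perfect distinguishability), or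
`Q(i|z) = Q(i)` for all `z` (the record carries no information about `i`). -/
theorem causal_state_dichotomy
    {E 𝒵 ι : Type*} [NormedAddCommGroup E] [InnerProductSpace ℂ E]
    [Fintype 𝒵] [Nonempty 𝒵] [Fintype ι] [Nonempty ι] [DecidableEq ι]
    (P : 𝒵 → ℝ) (hP : ∀ z, 0 < P z) (hP1 : ∑ z, P z = 1)
    (Q : ι → 𝒵 → ℝ) (hQ : ∀ i z, 0 < Q i z) (hQ1 : ∀ z, ∑ i, Q i z = 1)
    (σ : ι → E)
    (h : ∀ (m : ι) (z : 𝒵), ∑ i ∈ Finset.univ.erase m,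
      (Real.log (Q i z) - Real.log (∑ z', P z' * Q i z')) *
        ‖(inner ℂ (σ i) (σ m) : ℂ)‖ ^ 2 = 0) :
    ∀ i : ι, (∀ m : ι, m ≠ i → (inner ℂ (σ i) (σ m) : ℂ) = 0) ∨
      (∀ z : 𝒵, Q i z = ∑ z', P z' * Q i z') :=
  causal_state_dichotomy_general P hP hP1 Q hQ σ h
end
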